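/- arXiv:0710.3887 — 3 statements merged into one kernel-verified Lean document; each statement's English description precedes it below -/
import Mathlib

section
/- Let L be a lattice implication algebra and A an LI-ideal of L. Then A is an ultra LI-ideal of L if and only if A is both a prime proper LI-ideal and an ILI-ideal of L. -/
/-- A lattice implication algebra: a bounded lattice with an order-reversing
involution `compl` and an implication `imp` satisfying (I1)-(I5), (L1), (L2),
with the order characterized by `x ≤ y ↔ x → y = 1` (here `1 = ⊤`, `0 = ⊥`). -/
class LatticeImplicationAlgebra (L : Type*) extends Lattice L, BoundedOrder L where
  compl : L → L
  imp : L → L → L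
  compl_anti : ∀ x y : L, x ≤ y → compl y ≤ compl x
  compl_compl : ∀ x : L, compl (compl x) = x
  I1 : ∀ x y z : L, imp x (imp y z) = imp y (imp x z)
  I2 : ∀ x : L, imp x x = ⊤
  I3 : ∀ x y : L, imp x y = imp (compl y) (compl x)
  I4 : ∀ x y : L, imp x y = ⊤ → imp y x = ⊤ → x = y
  I5 : ∀ x y : L, imp (imp x y) y = imp (imp y x) x
  L1 : ∀ x y z : L, imp (x ⊔ y) z = imp x z ⊓ imp y z
  L2 : ∀ x y z : L, imp (x ⊓ y) z = imp x z ⊔ imp y z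
  le_iff_imp : ∀ x y : L, x ≤ y ↔ imp x y = ⊤

namespace LatticeImplicationAlgebra

variable {L : Type*} [LatticeImplicationAlgebra L]

/-- `A` is an LI-ideal: `0 ∈ A` and `(x→y)' ∈ A` together with `y ∈ A` imply `x ∈ A`. -/
def IsLIIdeal (A : Set L) : Prop :=
  (⊥ : L) ∈ A ∧ ∀ x y : L, compl (imp x y) ∈ A → y ∈ A → x ∈ A

end LatticeImplicationAlgebra

open LatticeImplicationAlgebra

/-- `A` is an ILI-ideal: `0 ∈ A` and `(((x→y)'→y)'→z)' ∈ A` together with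
`z ∈ A` imply `(x→y)' ∈ A`. -/
def IsILIIdeal {L : Type*} [LatticeImplicationAlgebra L] (A : Set L) : Prop :=
  (⊥ : L) ∈ A ∧ ∀ x y z : L,
    compl (imp (compl (imp (compl (imp x y)) y)) z) ∈ A → z ∈ A →
      compl (imp x y) ∈ A

section Aux

variable {L : Type*} [LatticeImplicationAlgebra L]

lemma lia_cc (x : L) : compl (compl x) = x := LatticeImplicationAlgebra.compl_compl x

lemma lia_imp_top (x : L) : imp x (⊤ : L) = ⊤ := (le_iff_imp x ⊤).mp le_top

lemma lia_compl_bot : compl (⊥ : L) = ⊤ := by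
  have h := compl_anti (⊥ : L) (compl (⊤ : L)) bot_le
  rw [lia_cc] at h
  exact top_le_iff.mp h

lemma lia_compl_top : compl (⊤ : L) = ⊥ := by
  have h := compl_anti (compl (⊥ : L)) (⊤ : L) le_top
  rw [lia_cc] at h
  exact le_bot_iff.mp h

lemma lia_top_imp (x : L) : imp (⊤ : L) x = x := by
  apply I4
  · rw [I5, lia_imp_top]
  · rw [I1, I2, lia_imp_top]

lemma lia_le_imp (x y : L) : y ≤ imp x y :=
  (le_iff_imp _ _).mpr (by rw [I1, I2, lia_imp_top])

lemma lia_compl_le_imp (x y : L) : compl x ≤ imp x y :=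
  (le_iff_imp _ _).mpr (by rw [I3 x y, I1, I2, lia_imp_top])

lemma lia_compl_sup (x y : L) : compl (x ⊔ y) = compl x ⊓ compl y := by
  apply le_antisymm
  · exact le_inf (compl_anti _ _ le_sup_left) (compl_anti _ _ le_sup_right)
  · have hx : x ≤ compl (compl x ⊓ compl y) := by
      have := compl_anti _ _ (inf_le_left (a := compl x) (b := compl y))
      rwa [lia_cc] at this
    have hy : y ≤ compl (compl x ⊓ compl y) := by
      have := compl_anti _ _ (inf_le_right (a := compl x) (b := compl y))
      rwa [lia_cc] at this
    have := compl_anti _ _ (sup_le hx hy)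
    rwa [lia_cc] at this

lemma lia_sup_eq (x y : L) : x ⊔ y = imp (imp x y) y := by
  have h1 : imp (x ⊔ y) y = imp x y := by rw [L1, I2, inf_top_eq]
  have h2 := I5 (x ⊔ y) y
  rw [h1, (le_iff_imp y (x ⊔ y)).mp le_sup_right, lia_top_imp] at h2
  exact h2.symm

lemma lia_mem_of_le {A : Set L} (hA : IsLIIdeal A) {a b : L}
    (h : a ≤ b) (hb : b ∈ A) : a ∈ A := by
  refine hA.2 a b ?_ hb
  rw [(le_iff_imp a b).mp h, lia_compl_top]
  exact hA.1

lemma lia_sup_mem {A : Set L} (hA : IsLIIdeal A) {a b : L}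
    (ha : a ∈ A) (hb : b ∈ A) : a ⊔ b ∈ A := by
  refine hA.2 (a ⊔ b) b ?_ hb
  have h1 : imp (a ⊔ b) b = imp a b := by rw [L1, I2, inf_top_eq]
  rw [h1]
  have h2 : compl (imp a b) ≤ a := by
    have := compl_anti _ _ (lia_compl_le_imp a b)
    rwa [lia_cc] at this
  exact lia_mem_of_le hA h2 ha

end Aux

/-- An LI-ideal `A` of a lattice implication algebra `L` is an ultra LI-ideal
iff `A` is a prime proper LI-ideal and an ILI-ideal of `L`. -/
theorem ultra_iff_prime_proper_and_ILI {L : Type*} [LatticeImplicationAlgebra L]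
    (A : Set L) (hA : IsLIIdeal A) :
    (∀ x : L, x ∈ A ↔ compl x ∉ A) ↔
      ((A ≠ Set.univ ∧ ∀ x y : L, x ⊓ y ∈ A → x ∈ A ∨ y ∈ A) ∧ IsILIIdeal A) := by
  constructor
  · intro hU
    refine ⟨⟨?_, ?_⟩, hA.1, ?_⟩
    · intro h
      exact (hU ⊥).mp hA.1 (by rw [lia_compl_bot, h]; trivial)
    · intro x y hxy
      by_contra hc
      push_neg at hc
      obtain ⟨hx, hy⟩ := hc
      have hx' : compl x ∈ A := by
        by_contra h; exact hx ((hU x).mpr h)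
      have hy' : compl y ∈ A := by
        by_contra h; exact hy ((hU y).mpr h)
      have hsup : compl x ⊔ compl y ∈ A := lia_sup_mem hA hx' hy'
      have heq : compl (x ⊓ y) = compl x ⊔ compl y := by
        have := lia_compl_sup (compl x) (compl y)
        rw [lia_cc, lia_cc] at this
        rw [← this, lia_cc]
      exact (hU (x ⊓ y)).mp hxy (heq ▸ hsup)
    · intro x y z h1 h2
      have hX : compl (imp (compl (imp x y)) y) ∈ A := hA.2 _ z h1 h2
      by_cases hu : compl (imp x y) ∈ A
      · exact hu
      · have hu' : compl (compl (imp x y)) ∈ A := not_not.mp (mt (hU _).mpr hu)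
        rw [lia_cc] at hu'
        have hy : y ∈ A := lia_mem_of_le hA (lia_le_imp x y) hu'
        exact hA.2 _ y hX hy
  · rintro ⟨⟨hproper, hprime⟩, hILI⟩ x
    constructor
    · intro hx hx'
      apply hproper
      apply Set.eq_univ_of_forall
      intro t
      refine hA.2 t x ?_ hx
      have h1 : compl (imp t x) ≤ compl x := compl_anti _ _ (lia_le_imp t x)
      exact lia_mem_of_le hA h1 hx'
    · intro hx'
      have ha : compl x ⊓ x ∈ A := by
        have h := hILI.2 (imp x (compl x)) (compl x) ⊥ ?_ hA.1
        · rw [← lia_sup_eq, lia_compl_sup, lia_cc] at h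
          exact h
        · have heq : compl (imp (compl (imp (imp x (compl x)) (compl x))) (compl x)) = ⊥ := by
            rw [← lia_sup_eq, lia_compl_sup, lia_cc,
              (le_iff_imp _ _).mp (inf_le_left (a := compl x) (b := x)), lia_compl_top]
          rw [← lia_sup_eq, lia_compl_sup, lia_cc] at heq ⊢
          rw [heq]
          rw [(le_iff_imp (⊥ : L) ⊥).mp le_rfl, lia_compl_top]
          exact hA.1
      rcases hprime x (compl x) (by rwa [inf_comm] at ha) with h | h
      · exact h
      · exact absurd h hx'
end

section
/- Let A be an LI-ideal of an MTL-algebra L. Then A is an ILI-ideal of L if and only if A is a Boolean LI-ideal of L (i.e., the condition that (x→(y→x)')' ∈ A implies x ∈ A for all x, y is equivalent to the condition that x∧x' ∈ A for all x). -/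
/-- An MTL-algebra: a residuated lattice (bounded lattice, commutative monoid
structure `tmul` with unit `⊤`, and residuum `himp` adjoint to `tmul`)
satisfying the pre-linearity equation `(x→y) ∨ (y→x) = 1`. -/
class MTLAlgebra (L : Type*) extends Lattice L, BoundedOrder L where
  tmul : L → L → L
  himp : L → L → L
  tmul_comm : ∀ x y : L, tmul x y = tmul y x
  tmul_assoc : ∀ x y z : L, tmul (tmul x y) z = tmul x (tmul y z)
  top_tmul : ∀ x : L, tmul ⊤ x = x
  adjoint : ∀ x y z : L, z ≤ himp x y ↔ tmul z x ≤ y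
  prelinearity : ∀ x y : L, himp x y ⊔ himp y x = ⊤

namespace MTLAlgebra

variable {L : Type*} [MTLAlgebra L]

/-- The negation `x' := x → 0`. -/
def neg (x : L) : L := himp x ⊥

/-- `A` is an LI-ideal of an MTL-algebra: `0 ∈ A` and `(x'→y')' ∈ A`
together with `x ∈ A` imply `y ∈ A`. -/
def IsLIIdeal (A : Set L) : Prop :=
  (⊥ : L) ∈ A ∧ ∀ x y : L, neg (himp (neg x) (neg y)) ∈ A → x ∈ A → y ∈ A

end MTLAlgebra

open MTLAlgebra

section Aux

variable {L : Type*} [MTLAlgebra L]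

lemma mtl_le_himp {x y z : L} : z ≤ himp x y ↔ tmul z x ≤ y := MTLAlgebra.adjoint x y z

lemma tmul_himp_le' (x y : L) : tmul (himp x y) x ≤ y := mtl_le_himp.mp le_rfl

lemma tmul_top' (x : L) : tmul x ⊤ = x := by
  rw [MTLAlgebra.tmul_comm]; exact MTLAlgebra.top_tmul x

lemma tmul_mono_left' {a b : L} (h : a ≤ b) (c : L) : tmul a c ≤ tmul b c := by
  have hb : b ≤ himp c (tmul b c) := mtl_le_himp.mpr le_rfl
  exact mtl_le_himp.mp (le_trans h hb)

lemma tmul_mono' {a b c d : L} (h1 : a ≤ b) (h2 : c ≤ d) : tmul a c ≤ tmul b d := by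
  refine le_trans (tmul_mono_left' h1 c) ?_
  rw [MTLAlgebra.tmul_comm b c, MTLAlgebra.tmul_comm b d]
  exact tmul_mono_left' h2 b

lemma himp_eq_top' {x y : L} (h : x ≤ y) : himp x y = ⊤ :=
  le_antisymm le_top (mtl_le_himp.mpr (by rw [MTLAlgebra.top_tmul]; exact h))

lemma top_himp' (x : L) : himp ⊤ x = x := by
  refine le_antisymm ?_ (mtl_le_himp.mpr (by rw [tmul_top']))
  have := tmul_himp_le' ⊤ x
  rwa [tmul_top'] at this

lemma neg_top' : neg (⊤ : L) = ⊥ := by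
  refine le_antisymm ?_ bot_le
  have := tmul_himp_le' ⊤ (⊥ : L)
  rwa [tmul_top'] at this

lemma tmul_neg_le' (x : L) : tmul (neg x) x ≤ ⊥ := tmul_himp_le' x ⊥

lemma le_negneg' (x : L) : x ≤ neg (neg x) :=
  mtl_le_himp.mpr (by rw [MTLAlgebra.tmul_comm]; exact tmul_neg_le' x)

lemma neg_anti' {x y : L} (h : x ≤ y) : neg y ≤ neg x :=
  mtl_le_himp.mpr (le_trans (tmul_mono' le_rfl h) (tmul_neg_le' y))

lemma himp_mono_right' {x y z : L} (h : y ≤ z) : himp x y ≤ himp x z :=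
  mtl_le_himp.mpr (le_trans (tmul_himp_le' x y) h)

lemma mem_of_le' {A : Set L} (hA : IsLIIdeal A) {a b : L} (h : b ≤ a) (ha : a ∈ A) :
    b ∈ A := by
  refine hA.2 a b ?_ ha
  rw [himp_eq_top' (neg_anti' h), neg_top']
  exact hA.1

lemma combo' {A : Set L} (hA : IsLIIdeal A) {u v w : L} (hu : u ∈ A) (hv : v ∈ A)
    (h : tmul (tmul (neg u) (neg v)) w ≤ ⊥) : w ∈ A := by
  have h1 : neg u ≤ himp (neg v) (neg w) :=
    mtl_le_himp.mpr (mtl_le_himp.mpr h)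
  have hm : neg (himp (neg v) (neg w)) ∈ A := by
    refine hA.2 u _ ?_ hu
    have h2 : neg u ≤ neg (neg (himp (neg v) (neg w))) :=
      le_trans h1 (le_negneg' _)
    rw [himp_eq_top' h2, neg_top']
    exact hA.1
  exact hA.2 v w hm hv

end Aux

/-- For an LI-ideal `A` of an MTL-algebra `L`, `A` is an ILI-ideal iff `A` is a
Boolean LI-ideal. -/
theorem ILI_iff_Boolean {L : Type*} [MTLAlgebra L] (A : Set L)
    (hA : IsLIIdeal A) :
    (∀ x y : L, neg (himp x (neg (himp y x))) ∈ A → x ∈ A) ↔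
      (∀ x : L, x ⊓ neg x ∈ A) := by
  constructor
  · intro h x
    apply h (x ⊓ neg x) ⊤
    rw [top_himp']
    have haa : x ⊓ neg x ≤ neg (x ⊓ neg x) := by
      refine mtl_le_himp.mpr (le_trans (tmul_mono' inf_le_right inf_le_left) ?_)
      exact tmul_neg_le' x
    rw [himp_eq_top' haa, neg_top']
    exact hA.1
  · intro h x y ht
    -- `x ≤ y → x`
    have hxyx : x ≤ himp y x :=
      mtl_le_himp.mpr (le_trans (tmul_mono' le_rfl le_top) (le_of_eq (tmul_top' x)))
    set r : L := himp x (neg x) with hr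
    have hs : neg r ∈ A :=
      mem_of_le' hA (neg_anti' (himp_mono_right' (neg_anti' hxyx))) ht
    have hb : x ⊓ neg x ∈ A := h x
    refine combo' hA hs hb ?_
    -- Goal: (r'' ⊗ b') ⊗ x ≤ ⊥ where b = x ⊓ x'
    set b : L := x ⊓ neg x with hbdef
    -- first : r ⊗ x ≤ b
    have hrx : tmul r x ≤ b := by
      refine le_inf ?_ (tmul_himp_le' x (neg x))
      exact le_trans (tmul_mono' le_top le_rfl) (le_of_eq (MTLAlgebra.top_tmul x))
    -- then : b' ⊗ x ≤ r'
    have hbx : tmul (neg b) x ≤ neg r := by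
      refine mtl_le_himp.mpr ?_
      rw [MTLAlgebra.tmul_assoc]
      refine le_trans (tmul_mono' le_rfl ?_) (tmul_neg_le' b)
      rw [MTLAlgebra.tmul_comm]
      exact hrx
    rw [MTLAlgebra.tmul_assoc]
    refine le_trans (tmul_mono' le_rfl hbx) ?_
    exact tmul_neg_le' (neg r)
end

section
/- Let A be an LI-ideal of an MTL-algebra L. Then A is an ultra LI-ideal of L if and only if A is a proper LI-ideal and for every x ∈ L, x ∈ A or x' ∈ A. -/
open MTLAlgebra

namespace MTLAlgebra

variable {L : Type*} [MTLAlgebra L]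

lemma tmul_himp_le (a b : L) : tmul (himp a b) a ≤ b :=
  (adjoint a b (himp a b)).1 le_rfl

lemma le_himp_iff_top {a b : L} : a ≤ b ↔ himp a b = ⊤ := by
  constructor
  · intro h
    refine le_antisymm le_top ((adjoint a b ⊤).2 ?_)
    rw [top_tmul]; exact h
  · intro h
    have := (adjoint a b ⊤).1 h.ge
    rwa [top_tmul] at this

lemma tmul_le_tmul_right {a b : L} (h : a ≤ b) (z : L) : tmul z a ≤ tmul z b := by
  rw [tmul_comm]
  exact (adjoint z (tmul z b) a).1 (h.trans ((adjoint z (tmul z b) b).2 (tmul_comm b z ▸ le_rfl)))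

lemma neg_antitone {a b : L} (h : a ≤ b) : neg b ≤ neg a :=
  (adjoint a ⊥ (neg b)).2 ((tmul_le_tmul_right h (neg b)).trans (tmul_himp_le b ⊥))

lemma neg_le_himp (a b : L) : neg a ≤ himp a b :=
  (adjoint a b (neg a)).2 ((tmul_himp_le a ⊥).trans bot_le)

lemma le_neg_neg (a : L) : a ≤ neg (neg a) :=
  (adjoint (neg a) ⊥ a).2 (le_of_eq_of_le (tmul_comm a (neg a)) (tmul_himp_le a ⊥))

lemma neg_top : (neg (⊤ : L)) = ⊥ := by
  refine le_antisymm ?_ bot_le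
  have := tmul_himp_le (⊤ : L) ⊥
  rwa [tmul_comm, top_tmul] at this

lemma IsLIIdeal.down {A : Set L} (hA : IsLIIdeal A) {x y : L} (h : y ≤ x) (hx : x ∈ A) :
    y ∈ A := by
  refine hA.2 x y ?_ hx
  have : himp (neg x) (neg y) = ⊤ := le_himp_iff_top.1 (neg_antitone h)
  rw [this, neg_top]
  exact hA.1

end MTLAlgebra

/-- An LI-ideal `A` of an MTL-algebra `L` is an ultra LI-ideal iff `A` is
proper and for every `x`, `x ∈ A` or `x' ∈ A`. -/
theorem ultra_iff_proper_and_mem_or_neg_mem {L : Type*} [MTLAlgebra L] (A : Set L)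
    (hA : IsLIIdeal A) :
    (∀ x : L, x ∈ A ↔ neg x ∉ A) ↔
      (A ≠ Set.univ ∧ ∀ x : L, x ∈ A ∨ neg x ∈ A) := by
  constructor
  · intro hU
    constructor
    · intro h
      have h1 : neg (⊥ : L) ∉ A := (hU ⊥).1 hA.1
      exact h1 (h ▸ Set.mem_univ _)
    · intro x
      by_cases hx : x ∈ A
      · exact Or.inl hx
      · right
        by_contra hn
        exact hx ((hU x).2 hn)
  · rintro ⟨hproper, htot⟩ x
    constructor
    · intro hx hnx
      apply hproper
      ext y
      simp only [Set.mem_univ, iff_true]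
      refine hA.2 x y ?_ hx
      have h1 : neg (neg x) ≤ himp (neg x) (neg y) := neg_le_himp (neg x) (neg y)
      have h2 : neg (himp (neg x) (neg y)) ≤ neg (neg (neg x)) := neg_antitone h1
      have h3 : neg (neg (neg x)) ≤ neg x := neg_antitone (le_neg_neg x)
      exact hA.down (h2.trans h3) hnx
    · intro hnx
      rcases htot x with h | h
      · exact h
      · exact absurd h hnx
end
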